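/- Let w, λ ∈ ℂ and let h : ℂ → ℂ be analytic at w. Define, for z ≠ w, u(z) = 1/(z−w) + h(z) and the 2×2 matrix-valued functions A(z) = [[u(z), λ],[1, −u(z)]] and g(z) = [[1, −1/(z−w)],[0, 1]]. Then for all z ≠ w in a punctured neighborhood of w, g(z)A(z)g(z)^{−1} − g′(z)g(z)^{−1} = [[h(z), λ + 2h(z)/(z−w)],[1, −h(z)]]. Consequently the matrix-valued function z ↦ g(z)A(z)g(z)^{−1} − g′(z)g(z)^{−1} − (2h(w)/(z−w))·E₁₂ (where E₁₂ is the elementary matrix with 1 in position (1,2)) extends analytically to w, and g A g^{−1} − g′g^{−1} itself extends analytically to w if and only if h(w) = 0. -/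

import Mathlib

open Topology

/-- The gauge matrix `g(z) = [[1, -1/(z-w)], [0, 1]]`. -/
noncomputable def gMat (w : ℂ) (z : ℂ) : Matrix (Fin 2) (Fin 2) ℂ :=
  !![1, -1 / (z - w); 0, 1]

/-- The entrywise derivative `g′(z)` of `g`. -/
noncomputable def gMat' (w : ℂ) (z : ℂ) : Matrix (Fin 2) (Fin 2) ℂ :=
  Matrix.of fun i j => deriv (fun s => gMat w s i j) z

/-- The Miura connection matrix `A(z) = [[u(z), λ], [1, -u(z)]]` with
`u(z) = 1/(z-w) + h(z)`. -/
noncomputable def AMat (w lam : ℂ) (h : ℂ → ℂ) (z : ℂ) : Matrix (Fin 2) (Fin 2) ℂ :=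
  !![1 / (z - w) + h z, lam; 1, -(1 / (z - w) + h z)]

/-- The gauge transform `g A g⁻¹ - g′ g⁻¹`. -/
noncomputable def gaugeTr (w lam : ℂ) (h : ℂ → ℂ) (z : ℂ) : Matrix (Fin 2) (Fin 2) ℂ :=
  gMat w z * AMat w lam h z * (gMat w z)⁻¹ - gMat' w z * (gMat w z)⁻¹

open Filter

/-!
Conjugating by the unipotent `g` moves the pole of `u` into the `(1,2)` entry, where it appears
as `2 h(z)/(z-w)`; splitting `h(z) = h(w) + (z-w) · dslope h w z` leaves the analytic matrix
`[[h, λ + 2 · dslope h w], [1, -h]]` plus `(2h(w)/(z-w)) · E₁₂`. A simple pole `c/(z-w)` has a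
continuous extension only when `c = 0`, so the gauge transform is regular exactly when `h(w) = 0`.
-/

theorem AnalyticAt.dslope {𝕜 E : Type*} [NontriviallyNormedField 𝕜] [NormedAddCommGroup E]
    [NormedSpace 𝕜 E] {f : 𝕜 → E} {w : 𝕜} (hf : AnalyticAt 𝕜 f w) :
    AnalyticAt 𝕜 (dslope f w) w :=
  let ⟨_, hp⟩ := hf
  ⟨_, hp.has_fpower_series_dslope_fslope⟩

theorem eq_zero_of_eventually_sub_mul_eq {𝕜 : Type*} [NontriviallyNormedField 𝕜]
    {F : 𝕜 → 𝕜} {w c : 𝕜} (hF : ContinuousAt F w)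
    (hc : ∀ᶠ z in 𝓝[≠] w, (z - w) * F z = c) : c = 0 := by
  have hlim : Tendsto (fun z => (z - w) * F z) (𝓝[≠] w) (𝓝 0) := by
    have : Tendsto (fun z => (z - w) * F z) (𝓝 w) (𝓝 ((w - w) * F w)) :=
      ((continuous_id.sub continuous_const).continuousAt.mul hF).tendsto
    simpa using this.mono_left nhdsWithin_le_nhds
  exact tendsto_nhds_unique tendsto_const_nhds (hlim.congr' hc)

lemma gMat_inv (w z : ℂ) : (gMat w z)⁻¹ = !![1, 1 / (z - w); 0, 1] := by
  apply Matrix.inv_eq_right_inv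
  simp [gMat, Matrix.one_fin_two]
  ring

lemma gMat'_of_ne {w z : ℂ} (hz : z ≠ w) : gMat' w z = !![0, 1 / (z - w) ^ 2; 0, 0] := by
  have hd : HasDerivAt (fun s : ℂ => -1 / (s - w)) (1 / (z - w) ^ 2) z :=
    ((hasDerivAt_const z (-1 : ℂ)).div ((hasDerivAt_id' z).sub_const w)
      (sub_ne_zero.2 hz)).congr_deriv (by ring)
  ext i j
  fin_cases i <;> fin_cases j <;> simp [gMat', gMat, hd.deriv]

lemma gaugeTr_of_ne {w z : ℂ} (lam : ℂ) (h : ℂ → ℂ) (hz : z ≠ w) :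
    gaugeTr w lam h z = !![h z, lam + 2 * h z / (z - w); 1, -h z] := by
  have hzw : z - w ≠ 0 := sub_ne_zero.2 hz
  rw [gaugeTr, gMat_inv, gMat'_of_ne hz]
  ext i j
  fin_cases i <;> fin_cases j <;> simp [gMat, AMat] <;> field_simp <;> ring

noncomputable def gaugeTrRegular (w lam : ℂ) (h : ℂ → ℂ) (z : ℂ) : Matrix (Fin 2) (Fin 2) ℂ :=
  !![h z, lam + 2 * dslope h w z; 1, -h z]

lemma analyticAt_gaugeTrRegular {w : ℂ} (lam : ℂ) {h : ℂ → ℂ} (hh : AnalyticAt ℂ h w)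
    (i j : Fin 2) : AnalyticAt ℂ (fun z => gaugeTrRegular w lam h z i j) w := by
  have := hh.dslope
  fin_cases i <;> fin_cases j <;> simp [gaugeTrRegular] <;> fun_prop

lemma gaugeTrRegular_of_ne {w z : ℂ} (lam : ℂ) (h : ℂ → ℂ) (hz : z ≠ w) :
    gaugeTrRegular w lam h z = gaugeTr w lam h z - (2 * h w / (z - w)) • !![0, 1; 0, 0] := by
  have hzw : z - w ≠ 0 := sub_ne_zero.2 hz
  rw [gaugeTr_of_ne lam h hz, gaugeTrRegular, dslope_of_ne h hz, slope_def_field]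
  ext i j
  fin_cases i <;> fin_cases j <;> simp [field]
  ring

theorem gauge_regular_iff_bethe_at_simple_pole (w lam : ℂ) (h : ℂ → ℂ)
    (hh : AnalyticAt ℂ h w) :
    -- the explicit form of the gauge transform near w
    (∀ᶠ z in 𝓝[≠] w,
      gaugeTr w lam h z = !![h z, lam + 2 * h z / (z - w); 1, -h z]) ∧
    -- after removing the term (2h(w)/(z-w))·E₁₂, it extends analytically to w
    (∃ G : ℂ → Matrix (Fin 2) (Fin 2) ℂ,
      (∀ i j, AnalyticAt ℂ (fun z => G z i j) w) ∧
      ∀ᶠ z in 𝓝[≠] w,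
        G z = gaugeTr w lam h z - (2 * h w / (z - w)) • !![0, 1; 0, 0]) ∧
    -- the gauge transform itself extends analytically to w iff h(w) = 0
    ((∃ G : ℂ → Matrix (Fin 2) (Fin 2) ℂ,
      (∀ i j, AnalyticAt ℂ (fun z => G z i j) w) ∧
      ∀ᶠ z in 𝓝[≠] w, G z = gaugeTr w lam h z) ↔ h w = 0) := by
  have hreg : ∀ᶠ z in 𝓝[≠] w,
      gaugeTrRegular w lam h z = gaugeTr w lam h z - (2 * h w / (z - w)) • !![0, 1; 0, 0] :=
    eventually_nhdsWithin_of_forall fun z hz => gaugeTrRegular_of_ne lam h hz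
  refine ⟨eventually_nhdsWithin_of_forall fun z hz => gaugeTr_of_ne lam h hz,
    ⟨_, analyticAt_gaugeTrRegular lam hh, hreg⟩, ⟨fun ⟨G, hGa, hG⟩ => ?_, fun hw0 => ?_⟩⟩
  · have hpole : ∀ᶠ z in 𝓝[≠] w,
        (z - w) * (G z 0 1 - gaugeTrRegular w lam h z 0 1) = 2 * h w := by
      filter_upwards [self_mem_nhdsWithin, hG, hreg] with z hz hGz hregz
      have hzw : z - w ≠ 0 := sub_ne_zero.2 hz
      rw [hGz, hregz]
      simp [field]
    have := eq_zero_of_eventually_sub_mul_eq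
      ((hGa 0 1).continuousAt.sub (analyticAt_gaugeTrRegular lam hh 0 1).continuousAt) hpole
    simpa using this
  · exact ⟨_, analyticAt_gaugeTrRegular lam hh, by simpa [hw0] using hreg⟩
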